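/- arXiv:1405.3222 — 2 statements merged into one kernel-verified Lean document; each statement's English description precedes it below -/
import Mathlib

section
/- Let D and X be real matrices with the same number of columns and suppose X has full column rank. Then the minimum ℓ2-norm solution of (D X⁺)(D X⁺)ᵀ x = (D X⁺) c equals the minimum ℓ2-norm solution of D Dᵀ x = D Xᵀ d, where d = (I − P_{X·null(D)}) c and P_{X·null(D)} is the orthogonal projection onto the subspace {X v : v ∈ null(D)}. -/
/-!
Both normal equations have the solution set `{x | Dᵀ x = Xᵀ d}`, so their minimum-norm
solutions agree. The key point is that `b = Xᵀ d` is orthogonal to `ker D`, because `d` is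
orthogonal to `X · ker D`. Then, for positive definite `G`, `D G Dᵀ x = D G b` makes
`v = Dᵀ x - b` satisfy `vᵀ G v = xᵀ D (G v) - bᵀ (G v) = 0`, since `G v ∈ ker D`; hence `v = 0`.
This applies to `G = 1` and to `G = (XᵀX)⁻¹`, for which `M Mᵀ = D G Dᵀ` and `M c = D G Xᵀ d`.
-/

open Matrix

/-- `P` is the matrix of the orthogonal projection of `ℝⁿ` onto `S`. -/
def IsOrthProjOn {n : ℕ} (P : Matrix (Fin n) (Fin n) ℝ)
    (S : Submodule ℝ (Fin n → ℝ)) : Prop :=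
  Pᵀ = P ∧ P * P = P ∧ (∀ x, P.mulVec x ∈ S) ∧ (∀ x ∈ S, P.mulVec x = x)

namespace Matrix

variable {m n p : Type*} [Fintype n] [Fintype p]

theorem mulVec_injective_of_rank_eq_card {K : Type*} [Field K] (A : Matrix m n K)
    (hA : A.rank = Fintype.card n) : Function.Injective A.mulVec := by
  have hker : Module.finrank K (LinearMap.ker A.mulVecLin) = 0 := by
    have := A.mulVecLin.finrank_range_add_finrank_ker
    rw [Module.finrank_fintype_fun_eq_card] at this
    change A.rank + _ = _ at this
    omega
  rw [← coe_mulVecLin, ← LinearMap.ker_eq_bot]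
  exact Submodule.finrank_eq_zero.mp hker

theorem sub_mulVec_dotProduct_eq_zero {R : Type*} [CommRing R] {P : Matrix n n R}
    (hP : Pᵀ = P) {s : n → R} (hs : P *ᵥ s = s) (c : n → R) :
    (c - P *ᵥ c) ⬝ᵥ s = 0 := by
  rw [sub_dotProduct, ← hP, mulVec_transpose, ← dotProduct_mulVec, hs, sub_self]

theorem posDef_transpose_mul_self_of_rank_eq_card (X : Matrix n p ℝ)
    (hX : X.rank = Fintype.card p) : (Xᵀ * X).PosDef := by
  simpa [conjTranspose_eq_transpose_of_trivial] using
    PosDef.conjTranspose_mul_self X (X.mulVec_injective_of_rank_eq_card hX)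

noncomputable def leftPinv {R : Type*} [CommRing R] [DecidableEq p] (X : Matrix n p R) :
    Matrix p n R :=
  (Xᵀ * X)⁻¹ * Xᵀ

section leftPinv

variable {R : Type*} [CommRing R] [DecidableEq p] {X : Matrix n p R}

theorem leftPinv_mul_self (hX : IsUnit (Xᵀ * X).det) : X.leftPinv * X = 1 := by
  rw [leftPinv, Matrix.mul_assoc, nonsing_inv_mul _ hX]

theorem leftPinv_mul_transpose_leftPinv (hX : IsUnit (Xᵀ * X).det) :
    X.leftPinv * X.leftPinvᵀ = (Xᵀ * X)⁻¹ := by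
  rw [leftPinv, transpose_mul, transpose_transpose, transpose_nonsing_inv, transpose_mul,
    transpose_transpose, Matrix.mul_assoc, ← Matrix.mul_assoc Xᵀ, mul_nonsing_inv _ hX,
    Matrix.mul_one]

end leftPinv

theorem mul_mul_transpose_mulVec_eq_iff [Fintype m] (A : Matrix m p ℝ) {G : Matrix p p ℝ}
    (hG : G.PosDef) {b : p → ℝ} (hb : ∀ k, A *ᵥ k = 0 → b ⬝ᵥ k = 0) (x : m → ℝ) :
    (A * G * Aᵀ) *ᵥ x = (A * G) *ᵥ b ↔ Aᵀ *ᵥ x = b := by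
  refine ⟨fun h => ?_, fun h => by rw [← mulVec_mulVec, h]⟩
  set v := Aᵀ *ᵥ x - b
  have hGv : A *ᵥ (G *ᵥ v) = 0 := by
    rw [mulVec_mulVec, mulVec_sub, mulVec_mulVec, h, sub_self]
  have hvGv : v ⬝ᵥ (G *ᵥ v) = 0 := by
    rw [sub_dotProduct, mulVec_transpose, ← dotProduct_mulVec, hGv, dotProduct_zero,
      hb _ hGv, sub_self]
  by_contra hne
  have hpos := hG.dotProduct_mulVec_pos (sub_ne_zero.mpr hne)
  rw [star_trivial, hvGv] at hpos
  exact lt_irrefl _ hpos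

end Matrix

/-- With `X` of full column rank and `X⁺ = (XᵀX)⁻¹Xᵀ`, the minimum
ℓ2-norm solution of `(DX⁺)(DX⁺)ᵀ x = (DX⁺) c` equals the minimum ℓ2-norm
solution of `D Dᵀ x = D Xᵀ d`, where `d = (I − P_{X·null(D)}) c`. -/
theorem min_norm_sol_transformed_dual {m n p : ℕ}
    (D : Matrix (Fin m) (Fin p) ℝ) (X : Matrix (Fin n) (Fin p) ℝ)
    (hX : X.rank = p)
    (c : Fin n → ℝ)
    (P : Matrix (Fin n) (Fin n) ℝ)
    (hP : IsOrthProjOn P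
      (Submodule.map X.mulVecLin (LinearMap.ker D.mulVecLin)))
    (M : Matrix (Fin m) (Fin n) ℝ) (hM : M = D * ((Xᵀ * X)⁻¹ * Xᵀ))
    (d : Fin n → ℝ) (hd : d = c - P.mulVec c) :
    ∀ x : Fin m → ℝ,
      ((M * Mᵀ).mulVec x = M.mulVec c ∧
        ∀ y, (M * Mᵀ).mulVec y = M.mulVec c →
          ∑ i, (x i) ^ 2 ≤ ∑ i, (y i) ^ 2)
      ↔
      ((D * Dᵀ).mulVec x = (D * Xᵀ).mulVec d ∧
        ∀ y, (D * Dᵀ).mulVec y = (D * Xᵀ).mulVec d →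
          ∑ i, (x i) ^ 2 ≤ ∑ i, (y i) ^ 2) := by
  obtain ⟨hPt, -, hPmem, hPfix⟩ := hP
  have hXX := X.posDef_transpose_mul_self_of_rank_eq_card (by simpa using hX)
  have hdet := (isUnit_iff_isUnit_det _).mp hXX.isUnit
  change M = D * X.leftPinv at hM
  have hb : ∀ k, D *ᵥ k = 0 → (Xᵀ *ᵥ d) ⬝ᵥ k = 0 := fun k hk => by
    rw [mulVec_transpose, ← dotProduct_mulVec, hd]
    exact sub_mulVec_dotProduct_eq_zero hPt (hPfix _ ⟨k, hk, rfl⟩) c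
  have hMMt : M * Mᵀ = D * (Xᵀ * X)⁻¹ * Dᵀ := by
    rw [hM, transpose_mul, Matrix.mul_assoc, ← Matrix.mul_assoc X.leftPinv,
      leftPinv_mul_transpose_leftPinv hdet, Matrix.mul_assoc]
  -- `P c = X w` with `D w = 0`, so `M c = D X⁺ (d + X w) = D X⁺ d`.
  have hMc : M *ᵥ c = (D * (Xᵀ * X)⁻¹) *ᵥ (Xᵀ *ᵥ d) := by
    obtain ⟨w, hw, hXw⟩ := hPmem c
    rw [SetLike.mem_coe, LinearMap.mem_ker, mulVecLin_apply] at hw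
    rw [mulVecLin_apply] at hXw
    calc M *ᵥ c = D *ᵥ X.leftPinv *ᵥ (d + X *ᵥ w) := by
          rw [hM, hXw, hd, sub_add_cancel, mulVec_mulVec]
      _ = (D * (Xᵀ * X)⁻¹) *ᵥ (Xᵀ *ᵥ d) := by
        rw [mulVec_add, mulVec_mulVec w, leftPinv_mul_self hdet, one_mulVec, mulVec_add, hw,
          add_zero, leftPinv, mulVec_mulVec, mulVec_mulVec, Matrix.mul_assoc]
  have hfirst : ∀ y, (M * Mᵀ) *ᵥ y = M *ᵥ c ↔ Dᵀ *ᵥ y = Xᵀ *ᵥ d := fun y => by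
    rw [hMMt, hMc]
    exact D.mul_mul_transpose_mulVec_eq_iff hXX.inv hb y
  have hsecond : ∀ y, (D * Dᵀ) *ᵥ y = (D * Xᵀ) *ᵥ d ↔ Dᵀ *ᵥ y = Xᵀ *ᵥ d := fun y => by
    simpa [← mulVec_mulVec] using D.mul_mul_transpose_mulVec_eq_iff PosDef.one hb y
  intro x
  simp only [hfirst, hsecond]
end

section
/- If X ∈ ℝ^{n×p} has full column rank and D ∈ ℝ^{m×p}, then the null space of D X⁺ decomposes as the orthogonal direct sum null(D X⁺) = null(Xᵀ) ⊕ X·null(D), where X·null(D) = {X v : v ∈ null(D)}. -/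
/-!
Since `X` has full column rank, `XᵀX` is invertible and `L = (XᵀX)⁻¹Xᵀ` is a left inverse of `X`
with the same kernel as `Xᵀ`. Any `y` splits as `(y - X L y) + X (L y)`: the first summand lies
in `ker L`, and the second lies in `X·null(D)` as soon as `D L y = 0`. Orthogonality is
`⟪u, X v⟫ = ⟪Xᵀ u, v⟫`.
-/

open Matrix

namespace Matrix

variable {m n p K : Type*} [Fintype n] [Fintype p]

theorem isUnit_of_rank_eq_card [Field K] [DecidableEq n] {A : Matrix n n K}
    (hA : A.rank = Fintype.card n) : IsUnit A := by
  have hrange : LinearMap.range A.mulVecLin = ⊤ :=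
    Submodule.eq_top_of_finrank_eq (by rw [Module.finrank_fintype_fun_eq_card]; exact hA)
  exact mulVec_surjective_iff_isUnit.mp (LinearMap.range_eq_top.mp hrange)

theorem isUnit_transpose_mul_self_of_rank_eq_card [Field K] [LinearOrder K]
    [IsStrictOrderedRing K] [Fintype m] [DecidableEq p] {X : Matrix m p K}
    (hX : X.rank = Fintype.card p) : IsUnit (Xᵀ * X) :=
  isUnit_of_rank_eq_card ((rank_transpose_mul_self X).trans hX)

theorem ker_mulVecLin_mul_of_isUnit [Field K] [DecidableEq n] {A : Matrix n n K}
    (hA : IsUnit A) (B : Matrix n p K) :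
    LinearMap.ker (A * B).mulVecLin = LinearMap.ker B.mulVecLin := by
  rw [mulVecLin_mul]
  exact LinearMap.ker_comp_of_ker_eq_bot _
    (LinearMap.ker_eq_bot.mpr (mulVec_injective_iff_isUnit.mpr hA))

theorem ker_mulVecLin_mul_eq_sup_of_mul_eq_one [CommRing K] [DecidableEq p]
    {L : Matrix p n K} {X : Matrix n p K} (hLX : L * X = 1) (D : Matrix m p K) :
    LinearMap.ker (D * L).mulVecLin
      = LinearMap.ker L.mulVecLin ⊔ Submodule.map X.mulVecLin (LinearMap.ker D.mulVecLin) := by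
  apply le_antisymm
  · intro y hy
    have hDLy : D *ᵥ (L *ᵥ y) = 0 := by simpa [mulVec_mulVec] using hy
    have hker : y - X *ᵥ (L *ᵥ y) ∈ LinearMap.ker L.mulVecLin := by
      simp [mulVec_sub, mulVec_mulVec, ← Matrix.mul_assoc, hLX]
    have hmap : X *ᵥ (L *ᵥ y) ∈ Submodule.map X.mulVecLin (LinearMap.ker D.mulVecLin) :=
      ⟨L *ᵥ y, hDLy, rfl⟩
    simpa using Submodule.add_mem_sup hker hmap
  · refine sup_le (fun u hu => ?_) ?_
    · have hu : L *ᵥ u = 0 := hu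
      show (D * L) *ᵥ u = 0
      rw [← mulVec_mulVec, hu, mulVec_zero]
    · rintro _ ⟨v, hv, rfl⟩
      have hv : D *ᵥ v = 0 := hv
      show (D * L) *ᵥ (X *ᵥ v) = 0
      rw [mulVec_mulVec, Matrix.mul_assoc, hLX, Matrix.mul_one, hv]

theorem dotProduct_eq_zero_of_mem_ker_transpose [CommSemiring K] {X : Matrix n p K}
    {u : n → K} (hu : u ∈ LinearMap.ker Xᵀ.mulVecLin) {w : n → K}
    (hw : w ∈ LinearMap.range X.mulVecLin) : u ⬝ᵥ w = 0 := by
  obtain ⟨v, rfl⟩ := hw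
  have hu : Xᵀ *ᵥ u = 0 := hu
  rw [mulVecLin_apply, dotProduct_mulVec, ← mulVec_transpose, hu, zero_dotProduct]

end Matrix

/-- If `X` has full column rank (so `X⁺ = (XᵀX)⁻¹Xᵀ`) and `D` is
arbitrary, then `null(D X⁺)` decomposes as the orthogonal direct sum
`null(Xᵀ) ⊕ X·null(D)`. -/
theorem kernel_DXpinv_decomposition {m n p : ℕ}
    (D : Matrix (Fin m) (Fin p) ℝ) (X : Matrix (Fin n) (Fin p) ℝ)
    (hX : X.rank = p) :
    LinearMap.ker (D * ((Xᵀ * X)⁻¹ * Xᵀ)).mulVecLin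
      = LinearMap.ker (Xᵀ).mulVecLin
          ⊔ Submodule.map X.mulVecLin (LinearMap.ker D.mulVecLin) ∧
    (∀ u ∈ LinearMap.ker (Xᵀ).mulVecLin,
      ∀ w ∈ Submodule.map X.mulVecLin (LinearMap.ker D.mulVecLin),
        ∑ i, u i * w i = 0) := by
  have hXX : IsUnit (Xᵀ * X) :=
    isUnit_transpose_mul_self_of_rank_eq_card (by rw [hX, Fintype.card_fin])
  have hLX : (Xᵀ * X)⁻¹ * Xᵀ * X = 1 := by
    rw [Matrix.mul_assoc, nonsing_inv_mul _ ((isUnit_iff_isUnit_det _).mp hXX)]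
  refine ⟨?_, fun u hu w hw => ?_⟩
  · rw [ker_mulVecLin_mul_eq_sup_of_mul_eq_one hLX,
      ker_mulVecLin_mul_of_isUnit (isUnit_nonsing_inv_iff.mpr hXX)]
  · exact dotProduct_eq_zero_of_mem_ker_transpose hu (LinearMap.map_le_range hw)
end
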